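/- Let X = x₁ + x₂e₂ + x₃e₃ + x₄e₄ ∈ H(α,β) with x₁ > 0 and w(X) = α x₂² + β x₃² + αβ x₄² > 0, and set x̄ = x₁² + w(X). Define Λ = (1/2)·ln(x̄) + ( arctan(√(w(X))/x₁) / √(w(X)) )·(x₂e₂ + x₃e₃ + x₄e₄). Then Matrix.exp(L(Λ)) = L(X), i.e. Λ is a logarithm of X. -/

import Mathlib

open Quaternion Matrix Real

/-- The standard basis `(1, e₂, e₃, e₄)` of `H(α,β) = ℍ[ℝ, -α, -β]`. -/
noncomputable def gqBasis (α β : ℝ) : Fin 4 → ℍ[ℝ, -α, -β] :=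
  ![1, ⟨0, 1, 0, 0⟩, ⟨0, 0, 1, 0⟩, ⟨0, 0, 0, 1⟩]

/-- The coordinates of a generalized quaternion with respect to `(1, e₂, e₃, e₄)`. -/
def gqCoord {α β : ℝ} (q : ℍ[ℝ, -α, -β]) : Fin 4 → ℝ :=
  ![q.re, q.imI, q.imJ, q.imK]

/-- `L M`: the matrix of left multiplication by `M` in the basis `(1, e₂, e₃, e₄)`. -/
noncomputable def L (α β : ℝ) (M : ℍ[ℝ, -α, -β]) : Matrix (Fin 4) (Fin 4) ℝ :=
  Matrix.of fun i j => gqCoord (M * gqBasis α β j) i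

lemma L_eq (α β a b c d : ℝ) : L α β ⟨a,b,c,d⟩ =
    !![a, -α*b, -β*c, -(α*β)*d;
       b, a, -β*d, β*c;
       c, α*d, a, -α*b;
       d, -c, b, a] := by
  ext i j
  fin_cases i <;> fin_cases j <;>
    simp [L, gqBasis, gqCoord, QuaternionAlgebra.re_mul, QuaternionAlgebra.imI_mul,
      QuaternionAlgebra.imJ_mul, QuaternionAlgebra.imK_mul]

lemma gqCoord_add {α β : ℝ} (p q : ℍ[ℝ, -α, -β]) :
    gqCoord (p + q) = gqCoord p + gqCoord q := by
  funext i; fin_cases i <;> simp [gqCoord]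

lemma gqCoord_smul {α β : ℝ} (c : ℝ) (p : ℍ[ℝ, -α, -β]) :
    gqCoord (c • p) = c • gqCoord p := by
  funext i; fin_cases i <;> simp [gqCoord]

lemma L_add (α β : ℝ) (M N : ℍ[ℝ, -α, -β]) : L α β (M + N) = L α β M + L α β N := by
  ext i j
  simp [L, add_mul, gqCoord_add]

lemma L_smul (α β c : ℝ) (M : ℍ[ℝ, -α, -β]) : L α β (c • M) = c • L α β M := by
  ext i j
  simp [L, smul_mul_assoc, gqCoord_smul]

lemma L_one (α β : ℝ) : L α β 1 = 1 := by
  ext i j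
  fin_cases i <;> fin_cases j <;>
    simp [L, gqBasis, gqCoord, Matrix.one_apply]

set_option maxHeartbeats 1000000 in
/-- If `x₁ > 0` and `w(X) = α x₂² + β x₃² + αβ x₄² > 0`, set `x̄ = x₁² + w(X)`. Then
`Λ = (1/2) ln x̄ + (arctan(√w/x₁)/√w) • (x₂e₂ + x₃e₃ + x₄e₄)` is a logarithm of
`X = x₁ + x₂e₂ + x₃e₃ + x₄e₄`: `exp (L(Λ)) = L(X)`. -/
theorem log_of_w_pos (α β x₁ x₂ x₃ x₄ : ℝ)
    (hx₁ : 0 < x₁) (hw : 0 < α * x₂ ^ 2 + β * x₃ ^ 2 + α * β * x₄ ^ 2) :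
    NormedSpace.exp
      (L α β
        (((1 / 2) * Real.log (x₁ ^ 2 + (α * x₂ ^ 2 + β * x₃ ^ 2 + α * β * x₄ ^ 2))) • 1 +
          (Real.arctan (Real.sqrt (α * x₂ ^ 2 + β * x₃ ^ 2 + α * β * x₄ ^ 2) / x₁) /
            Real.sqrt (α * x₂ ^ 2 + β * x₃ ^ 2 + α * β * x₄ ^ 2)) •
            (⟨0, x₂, x₃, x₄⟩ : ℍ[ℝ, -α, -β]))) =
      L α β ⟨x₁, x₂, x₃, x₄⟩ := by
  set w : ℝ := α * x₂ ^ 2 + β * x₃ ^ 2 + α * β * x₄ ^ 2 with hwdef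
  set sw : ℝ := Real.sqrt w with hswdef
  have hsw : 0 < sw := Real.sqrt_pos.mpr hw
  have hsw2 : sw ^ 2 = w := Real.sq_sqrt hw.le
  set xb : ℝ := x₁ ^ 2 + w with hxbdef
  have hxb : 0 < xb := by positivity
  have hsxb : 0 < Real.sqrt xb := Real.sqrt_pos.mpr hxb
  set s : ℝ := (1 / 2) * Real.log xb with hsdef
  set θ : ℝ := Real.arctan (sw / x₁) with hθdef
  set V : ℍ[ℝ, -α, -β] := (⟨0, x₂, x₃, x₄⟩ : ℍ[ℝ, -α, -β]) with hVdef
  set A : Matrix (Fin 4) (Fin 4) ℝ := L α β V with hAdef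
  have hAe : A = !![0, -α*x₂, -β*x₃, -(α*β)*x₄;
       x₂, 0, -β*x₄, β*x₃;
       x₃, α*x₄, 0, -α*x₂;
       x₄, -x₃, x₂, 0] := by rw [hAdef, hVdef, L_eq]
  have hA2 : A * A = (-w) • (1 : Matrix (Fin 4) (Fin 4) ℝ) := by
    rw [hAe]
    ext i j
    fin_cases i <;> fin_cases j <;>
      simp [Matrix.mul_apply, Fin.sum_univ_four, Matrix.one_apply, hwdef] <;> ring
  have key : ∀ a b c d : ℝ, (a • (1 : Matrix (Fin 4) (Fin 4) ℝ) + b • A) * (c • 1 + d • A) =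
      (a*c - b*d*w) • (1 : Matrix (Fin 4) (Fin 4) ℝ) + (a*d + b*c) • A := by
    intro a b c d
    simp only [add_mul, mul_add, Matrix.smul_mul, Matrix.mul_smul, one_mul, mul_one, hA2,
      smul_smul]
    module
  -- the ring hom ℂ → matrices
  set ψ : ℂ →+* Matrix (Fin 4) (Fin 4) ℝ :=
    { toFun := fun z => z.re • (1 : Matrix (Fin 4) (Fin 4) ℝ) + (z.im / sw) • A
      map_one' := by simp
      map_mul' := by
        intro z z'
        rw [key]
        have e1 : (z*z').re = z.re * z'.re - z.im / sw * (z'.im / sw) * w := by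
          rw [Complex.mul_re]; field_simp; linear_combination (-(z.im * z'.im)) * hsw2
        have e2 : (z*z').im / sw = z.re * (z'.im / sw) + z.im / sw * z'.re := by
          rw [Complex.mul_im]; ring
        rw [e1, e2]
      map_zero' := by simp
      map_add' := by
        intro z z'
        simp only [Complex.add_re, Complex.add_im, add_div, add_smul]
        abel } with hψdef
  have hψ : ∀ z : ℂ, ψ z = z.re • (1 : Matrix (Fin 4) (Fin 4) ℝ) + (z.im / sw) • A :=
    fun _ => rfl
  have hcont : Continuous ψ := by
    have : Continuous fun z : ℂ =>
        z.re • (1 : Matrix (Fin 4) (Fin 4) ℝ) + (z.im / sw) • A :=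
      (Complex.continuous_re.smul continuous_const).add
        ((Complex.continuous_im.div_const _).smul continuous_const)
    exact this
  -- identify the two matrices as ψ-images
  have hΛ : L α β (s • 1 + (θ / sw) • V) = ψ ⟨s, θ⟩ := by
    rw [L_add, L_smul, L_smul, L_one, hψ ⟨s, θ⟩]
  have hX : L α β (⟨x₁, x₂, x₃, x₄⟩ : ℍ[ℝ, -α, -β]) = ψ ⟨x₁, sw⟩ := by
    have hq : (⟨x₁, x₂, x₃, x₄⟩ : ℍ[ℝ, -α, -β]) = x₁ • 1 + V := by
      rw [hVdef]; ext <;> simp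
    rw [hq, L_add, L_smul, L_one, hψ ⟨x₁, sw⟩]
    simp only [div_self hsw.ne', one_smul]
    rfl
  -- real computations
  have hE : Real.exp s = Real.sqrt xb := by
    rw [hsdef, Real.sqrt_eq_rpow, Real.rpow_def_of_pos hxb]
    ring_nf
  have hsq : Real.sqrt (1 + (sw / x₁) ^ 2) = Real.sqrt xb / x₁ := by
    have h1 : 1 + (sw / x₁) ^ 2 = xb / x₁ ^ 2 := by
      field_simp
      rw [hsw2, hxbdef]
    rw [h1, Real.sqrt_div hxb.le, Real.sqrt_sq hx₁.le]
  have hcos : Real.cos θ = x₁ / Real.sqrt xb := by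
    rw [hθdef, Real.cos_arctan, hsq, one_div_div]
  have hsin : Real.sin θ = sw / Real.sqrt xb := by
    rw [hθdef, Real.sin_arctan, hsq]
    field_simp
  have hexpz : Complex.exp ⟨s, θ⟩ = ⟨x₁, sw⟩ := by
    apply Complex.ext
    · rw [Complex.exp_re]
      show Real.exp s * Real.cos θ = x₁
      rw [hE, hcos]
      field_simp
    · rw [Complex.exp_im]
      show Real.exp s * Real.sin θ = sw
      rw [hE, hsin]
      field_simp
  -- put everything together
  rw [hΛ, hX]
  letI : SeminormedRing (Matrix (Fin 4) (Fin 4) ℝ) := Matrix.linftyOpSemiNormedRing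
  letI : NormedRing (Matrix (Fin 4) (Fin 4) ℝ) := Matrix.linftyOpNormedRing
  letI : NormedAlgebra ℝ (Matrix (Fin 4) (Fin 4) ℝ) := Matrix.linftyOpNormedAlgebra
  erw [← NormedSpace.map_exp ψ hcont ⟨s, θ⟩]
  congr 1
  rw [← Complex.exp_eq_exp_ℂ]
  exact hexpz
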